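/- Let ℒ be a Lie n-algebra over a field of characteristic ≠ 2 and let 𝒰 be the quotient of ℒ^{⊗n} by the subspace spanned by (i) [l₁,…,lₙ]⊗l'₂⊗…⊗l'ₙ − Σ_{1≤i≤n} l₁⊗…⊗[lᵢ,l'₂,…,l'ₙ]⊗…⊗lₙ, and (ii) all l₁⊗…⊗lₙ with lᵢ = l_{i+1} for some i. Then the bracket [l₁¹⊙…⊙lₙ¹,…,l₁ⁿ⊙…⊙lₙⁿ] = [l₁¹,…,lₙ¹]⊙…⊙[l₁ⁿ,…,lₙⁿ] is well defined on 𝒰 and makes 𝒰 a Lie n-algebra, and the map u : 𝒰 → ℒ, l₁⊙…⊙lₙ ↦ [l₁,…,lₙ], is a Lie n-algebra homomorphism. -/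

import Mathlib

open scoped BigOperators

/-- The fundamental identity of a Leibniz `(n+2)`-algebra. -/
def IsFund {K L : Type} [Field K] [AddCommGroup L] [Module K L] {n : ℕ}
    (b : MultilinearMap K (fun _ : Fin (n + 2) => L) L) : Prop :=
  ∀ (l : Fin (n + 2) → L) (l' : Fin (n + 1) → L),
    b (Fin.cons (b l) l') =
      ∑ i : Fin (n + 2), b (Function.update l i (b (Fin.cons (l i) l')))

/-- Skew symmetry: the defining identity of Lie `n`-algebras. -/
def IsSkew {K L : Type} [Field K] [AddCommGroup L] [Module K L] {n : ℕ}
    (b : MultilinearMap K (fun _ : Fin (n + 2) => L) L) : Prop :=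
  ∀ (l : Fin (n + 2) → L) (σ : Equiv.Perm (Fin (n + 2))),
    b l = (Equiv.Perm.sign σ : ℤ) • b (fun i => l (σ i))

/-- `N` is an (n-sided) ideal w.r.t. the bracket `b`. -/
def IsIdeal {K L : Type} [Field K] [AddCommGroup L] [Module K L] {n : ℕ}
    (b : MultilinearMap K (fun _ : Fin (n + 2) => L) L) (N : Submodule K L) : Prop :=
  ∀ (x : Fin (n + 2) → L) (i : Fin (n + 2)), x i ∈ N → b x ∈ N

/-- The ideal generated by a set `S`. -/
def idealSpan {K L : Type} [Field K] [AddCommGroup L] [Module K L] {n : ℕ}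
    (b : MultilinearMap K (fun _ : Fin (n + 2) => L) L) (S : Set L) : Submodule K L :=
  sInf {N : Submodule K L | S ⊆ N ∧ IsIdeal b N}

/-- The ideal of the subalgebra with carrier `C` generated by `S ⊆ C`. -/
def idealSpanIn {K L : Type} [Field K] [AddCommGroup L] [Module K L] {n : ℕ}
    (b : MultilinearMap K (fun _ : Fin (n + 2) => L) L) (C S : Set L) : Submodule K L :=
  sInf {N : Submodule K L | S ⊆ N ∧
    ∀ (x : Fin (n + 2) → L) (i : Fin (n + 2)), (∀ j, x j ∈ C) → x i ∈ N → b x ∈ N}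

/-- `f` is a homomorphism of Leibniz `n`-algebras from `(L, b)` to `(M, c)`. -/
def IsHom {K L M : Type} [Field K] [AddCommGroup L] [Module K L]
    [AddCommGroup M] [Module K M] {n : ℕ}
    (b : MultilinearMap K (fun _ : Fin (n + 2) => L) L)
    (c : MultilinearMap K (fun _ : Fin (n + 2) => M) M) (f : L →ₗ[K] M) : Prop :=
  ∀ x : Fin (n + 2) → L, f (b x) = c (fun i => f (x i))

/-- `⟨l₁,…,lₙ⟩_σ = [l₁,…,lₙ] - sgn σ • [l_{σ 1},…,l_{σ n}]`. -/
def relBr {K L : Type} [Field K] [AddCommGroup L] [Module K L] {n : ℕ}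
    (b : MultilinearMap K (fun _ : Fin (n + 2) => L) L)
    (l : Fin (n + 2) → L) (σ : Equiv.Perm (Fin (n + 2))) : L :=
  b l - (Equiv.Perm.sign σ : ℤ) • b (fun i => l (σ i))

/-- The componentwise bracket on `L × L`. -/
noncomputable def prodBr {K L : Type} [Field K] [AddCommGroup L] [Module K L] {n : ℕ}
    (b : MultilinearMap K (fun _ : Fin (n + 2) => L) L) :
    MultilinearMap K (fun _ : Fin (n + 2) => L × L) (L × L) :=
  (b.compLinearMap (fun _ => LinearMap.fst K L L)).prod
    (b.compLinearMap (fun _ => LinearMap.snd K L L))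

/-- The commutator ideal `[N₁,…,Nₙ]` of a family of submodules. -/
def commutatorIdeal {K L : Type} [Field K] [AddCommGroup L] [Module K L] {n : ℕ}
    (b : MultilinearMap K (fun _ : Fin (n + 2) => L) L)
    (N : Fin (n + 2) → Submodule K L) : Submodule K L :=
  idealSpan b {y | ∃ (l : Fin (n + 2) → L) (σ : Equiv.Perm (Fin (n + 2))),
    (∀ i, l (σ i) ∈ N i) ∧ y = b l}

open PiTensorProduct

/-- The subspace of `ℒ^{⊗n}` spanned by the fundamental-identity relations
`[l₁,…,lₙ]⊗l'₂⊗…⊗l'ₙ − Σᵢ l₁⊗…⊗[lᵢ,l'₂,…,l'ₙ]⊗…⊗lₙ`. -/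
def leibnizRelations {K L : Type} [Field K] [AddCommGroup L] [Module K L] {n : ℕ}
    (b : MultilinearMap K (fun _ : Fin (n + 2) => L) L) :
    Submodule K (PiTensorProduct K fun _ : Fin (n + 2) => L) :=
  Submodule.span K {w | ∃ (l : Fin (n + 2) → L) (l' : Fin (n + 1) → L),
    w = PiTensorProduct.tprod K (Fin.cons (b l) l') -
      ∑ i : Fin (n + 2), tprod K (Function.update l i (b (Fin.cons (l i) l')))}


/-- The subspace of `ℒ^{⊗n}` spanned by the fundamental-identity relations together with
the elementary tensors having two equal adjacent entries. -/
def lieRelations {K L : Type} [Field K] [AddCommGroup L] [Module K L] {n : ℕ}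
    (b : MultilinearMap K (fun _ : Fin (n + 2) => L) L) :
    Submodule K (PiTensorProduct K fun _ : Fin (n + 2) => L) :=
  leibnizRelations b ⊔
    Submodule.span K {w | ∃ l : Fin (n + 2) → L,
      (∃ i : Fin (n + 1), l i.castSucc = l i.succ) ∧ w = tprod K l}

section Aux

variable {K L M : Type} [Field K] [AddCommGroup L] [Module K L]
  [AddCommGroup M] [Module K M] {n : ℕ}

/-- A multilinear map vanishing on tuples with equal adjacent entries is antisymmetric
under adjacent transpositions. -/
theorem aux_adj_swap (g : MultilinearMap K (fun _ : Fin (n + 2) => L) M)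
    (h0 : ∀ m : Fin (n + 2) → L, (∃ i : Fin (n + 1), m i.castSucc = m i.succ) → g m = 0)
    (j : Fin (n + 1)) (m : Fin (n + 2) → L) :
    g (fun i => m (Equiv.swap j.castSucc j.succ i)) = - g m := by
  have hne : j.castSucc ≠ j.succ := (Fin.castSucc_lt_succ : j.castSucc < j.succ).ne
  set a := m j.castSucc with ha
  set c := m j.succ with hc
  have key : g (Function.update (Function.update m j.castSucc (a + c)) j.succ (a + c)) = 0 := by
    refine h0 _ ⟨j, ?_⟩
    rw [Function.update_of_ne hne, Function.update_self, Function.update_self]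
  rw [g.map_update_add] at key
  rw [Function.update_comm hne (a + c) a m, Function.update_comm hne (a + c) c m] at key
  rw [g.map_update_add, g.map_update_add] at key
  have t1 : g (Function.update (Function.update m j.succ a) j.castSucc a) = 0 := by
    refine h0 _ ⟨j, ?_⟩
    rw [Function.update_self, Function.update_of_ne hne.symm, Function.update_self]
  have t4 : g (Function.update (Function.update m j.succ c) j.castSucc c) = 0 := by
    refine h0 _ ⟨j, ?_⟩
    rw [Function.update_self, Function.update_of_ne hne.symm, Function.update_self]
  have t3 : Function.update (Function.update m j.succ c) j.castSucc a = m := by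
    funext i
    rcases eq_or_ne i j.castSucc with rfl | h1
    · rw [Function.update_self]
    rcases eq_or_ne i j.succ with rfl | h2
    · rw [Function.update_of_ne h1, Function.update_self]
    · rw [Function.update_of_ne h1, Function.update_of_ne h2]
  have t2 : Function.update (Function.update m j.succ a) j.castSucc c =
      fun i => m (Equiv.swap j.castSucc j.succ i) := by
    funext i
    rcases eq_or_ne i j.castSucc with rfl | h1
    · rw [Function.update_self, Equiv.swap_apply_left]
    rcases eq_or_ne i j.succ with rfl | h2
    · rw [Function.update_of_ne h1, Function.update_self, Equiv.swap_apply_right]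
    · rw [Function.update_of_ne h1, Function.update_of_ne h2,
        Equiv.swap_apply_of_ne_of_ne h1 h2]
  rw [t1, t2, t3, t4] at key
  rw [zero_add, add_zero] at key
  exact eq_neg_of_add_eq_zero_left key

/-- A multilinear map vanishing on tuples with equal adjacent entries transforms by the
sign under any permutation. -/
theorem aux_perm (g : MultilinearMap K (fun _ : Fin (n + 2) => L) M)
    (h0 : ∀ m : Fin (n + 2) → L, (∃ i : Fin (n + 1), m i.castSucc = m i.succ) → g m = 0)
    (σ : Equiv.Perm (Fin (n + 2))) (m : Fin (n + 2) → L) :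
    g (fun i => m (σ i)) = (Equiv.Perm.sign σ : ℤ) • g m := by
  have hσ : σ ∈ Submonoid.closure
      (Set.range fun i : Fin (n + 1) => Equiv.swap i.castSucc i.succ) := by
    rw [Equiv.Perm.mclosure_swap_castSucc_succ]; trivial
  induction hσ using Submonoid.closure_induction generalizing m with
  | mem τ hτ =>
    obtain ⟨j, rfl⟩ := hτ
    rw [aux_adj_swap g h0 j m, Equiv.Perm.sign_swap (Fin.castSucc_lt_succ : j.castSucc < j.succ).ne]
    simp
  | one => simp
  | mul τ ρ _ _ hτ hρ =>
    have h1 : (fun i => m ((τ * ρ) i)) = fun i => (fun k => m (τ k)) (ρ i) := rfl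
    rw [h1, hρ (fun k => m (τ k)), hτ m, smul_smul]
    congr 1
    rw [_root_.map_mul Equiv.Perm.sign τ ρ, Units.val_mul]
    ring

end Aux

/-- on the quotient `𝒰` of `ℒ^{⊗n}` by the fundamental-identity relations
and the tensors with two equal adjacent entries, the componentwise bracket is well
defined and makes `𝒰` a Lie n-algebra, and `u : l₁⊙…⊙lₙ ↦ [l₁,…,lₙ]` is a homomorphism
of Lie n-algebras. -/
theorem uce_lie_bracket_well_defined
    {K L : Type} [Field K] [AddCommGroup L] [Module K L] {n : ℕ}
    (hchar : (2 : K) ≠ 0)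
    (b : MultilinearMap K (fun _ : Fin (n + 2) => L) L)
    (hfund : IsFund b) (hskew : IsSkew b) :
    ∃ (Ubr : MultilinearMap K
        (fun _ : Fin (n + 2) =>
          (PiTensorProduct K fun _ : Fin (n + 2) => L) ⧸ lieRelations b)
        ((PiTensorProduct K fun _ : Fin (n + 2) => L) ⧸ lieRelations b))
      (u : ((PiTensorProduct K fun _ : Fin (n + 2) => L) ⧸ lieRelations b) →ₗ[K] L),
      (∀ x : Fin (n + 2) → (Fin (n + 2) → L),
        Ubr (fun j => Submodule.Quotient.mk (tprod K (x j))) =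
          Submodule.Quotient.mk (tprod K (fun j => b (x j)))) ∧
      IsFund Ubr ∧ IsSkew Ubr ∧
      (∀ l : Fin (n + 2) → L, u (Submodule.Quotient.mk (tprod K l)) = b l) ∧
      IsHom Ubr b u := by
  classical
  set R := lieRelations b with hR
  -- the bracket kills tuples with equal adjacent entries
  have hbadj : ∀ l : Fin (n + 2) → L, (∃ i : Fin (n + 1), l i.castSucc = l i.succ) →
      b l = 0 := by
    rintro l ⟨i, hi⟩
    have hne : i.castSucc ≠ i.succ := (Fin.castSucc_lt_succ : i.castSucc < i.succ).ne
    have hswap : (fun k => l (Equiv.swap i.castSucc i.succ k)) = l := by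
      funext k
      rcases eq_or_ne k i.castSucc with rfl | h1
      · rw [Equiv.swap_apply_left, hi]
      rcases eq_or_ne k i.succ with rfl | h2
      · rw [Equiv.swap_apply_right, hi]
      · rw [Equiv.swap_apply_of_ne_of_ne h1 h2]
    have h1 := hskew l (Equiv.swap i.castSucc i.succ)
    rw [Equiv.Perm.sign_swap hne, hswap] at h1
    have h2 : b l + b l = 0 := by
      have heq : b l = -(b l) := by simpa using h1
      nth_rewrite 1 [heq]
      exact neg_add_cancel (b l)
    have h3 : (2 : K) • b l = 0 := by rw [two_smul]; exact h2
    rcases smul_eq_zero.1 h3 with h | h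
    · exact absurd h hchar
    · exact h
  -- the lifted bracket kills all relations
  have hle : R ≤ LinearMap.ker (PiTensorProduct.lift b) := by
    rw [hR, lieRelations]
    apply sup_le
    · rw [leibnizRelations]
      rw [Submodule.span_le]
      rintro w ⟨l, l', rfl⟩
      simp only [SetLike.mem_coe, LinearMap.mem_ker, map_sub, map_sum,
        PiTensorProduct.lift.tprod]
      rw [sub_eq_zero]
      exact hfund l l'
    · rw [Submodule.span_le]
      rintro w ⟨l, hl, rfl⟩
      simp only [SetLike.mem_coe, LinearMap.mem_ker, PiTensorProduct.lift.tprod]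
      exact hbadj l hl
  set u : ((PiTensorProduct K fun _ : Fin (n + 2) => L) ⧸ R) →ₗ[K] L :=
    R.liftQ (PiTensorProduct.lift b) hle with hu
  have hquot : ∀ l : Fin (n + 2) → L,
      u (Submodule.Quotient.mk (tprod K l)) = b l := by
    intro l
    rw [hu]
    erw [Submodule.liftQ_apply]
    exact PiTensorProduct.lift.tprod l
  -- the multilinear map `l ↦ l₁ ⊙ … ⊙ lₙ`
  set g : MultilinearMap K (fun _ : Fin (n + 2) => L)
      ((PiTensorProduct K fun _ : Fin (n + 2) => L) ⧸ R) :=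
    R.mkQ.compMultilinearMap (tprod K) with hg
  have hgapp : ∀ m : Fin (n + 2) → L, g m = Submodule.Quotient.mk (tprod K m) := fun m => rfl
  have hg0 : ∀ m : Fin (n + 2) → L, (∃ i : Fin (n + 1), m i.castSucc = m i.succ) →
      g m = 0 := by
    intro m hm
    rw [hgapp, Submodule.Quotient.mk_eq_zero]
    exact Submodule.mem_sup_right (Submodule.subset_span ⟨m, hm, rfl⟩)
  set Ubr : MultilinearMap K
      (fun _ : Fin (n + 2) => (PiTensorProduct K fun _ : Fin (n + 2) => L) ⧸ R)
      ((PiTensorProduct K fun _ : Fin (n + 2) => L) ⧸ R) :=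
    g.compLinearMap (fun _ => u) with hUbr
  have hUapp : ∀ x, Ubr x = g (fun i => u (x i)) := fun x => rfl
  have huU : ∀ x, u (Ubr x) = b (fun i => u (x i)) := by
    intro x
    rw [hUapp, hgapp]
    exact hquot _
  refine ⟨Ubr, u, ?_, ?_, ?_, hquot, huU⟩
  · -- bracket on elementary tensors
    intro x
    rw [hUapp]
    have : (fun j => u (Submodule.Quotient.mk (tprod K (x j)))) = fun j => b (x j) := by
      funext j; exact hquot (x j)
    rw [this, hgapp]
  · -- fundamental identity
    intro x x'
    set m : Fin (n + 2) → L := fun i => u (x i) with hm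
    set m' : Fin (n + 1) → L := fun i => u (x' i) with hm'
    have hmem : PiTensorProduct.tprod K (Fin.cons (b m) m') -
        ∑ i : Fin (n + 2), tprod K (Function.update m i (b (Fin.cons (m i) m'))) ∈ R := by
      exact Submodule.mem_sup_left (Submodule.subset_span ⟨m, m', rfl⟩)
    have hz := (Submodule.Quotient.mk_eq_zero R).2 hmem
    rw [Submodule.Quotient.mk_sub, sub_eq_zero] at hz
    have hzsum : (Submodule.Quotient.mk (tprod K (Fin.cons (b m) m')) :
        (PiTensorProduct K fun _ : Fin (n + 2) => L) ⧸ R) =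
        ∑ i : Fin (n + 2),
          Submodule.Quotient.mk (tprod K (Function.update m i (b (Fin.cons (m i) m')))) := by
      rw [hz, ← Submodule.mkQ_apply, map_sum]
      simp [Submodule.mkQ_apply]
    have hlhs : Ubr (Fin.cons (Ubr x) x') =
        Submodule.Quotient.mk (PiTensorProduct.tprod K (Fin.cons (b m) m')) := by
      rw [hUapp, hgapp]
      have hfn : (fun j => u (Fin.cons (α := fun _ => (PiTensorProduct K fun _ : Fin (n + 2) => L) ⧸ R) (Ubr x) x' j)) = Fin.cons (b m) m' := by
        funext j
        refine Fin.cases ?_ (fun j => ?_) j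
        · rw [Fin.cons_zero, Fin.cons_zero, huU]
        · rw [Fin.cons_succ, Fin.cons_succ]
      rw [hfn]
    have hrhs : ∀ i : Fin (n + 2),
        Ubr (Function.update x i (Ubr (Fin.cons (x i) x'))) =
        Submodule.Quotient.mk (tprod K (Function.update m i (b (Fin.cons (m i) m')))) := by
      intro i
      rw [hUapp, hgapp]
      have hfn : (fun j => u (Function.update x i (Ubr (Fin.cons (x i) x')) j)) =
          Function.update m i (b (Fin.cons (m i) m')) := by
        funext j
        rcases eq_or_ne j i with rfl | hji
        · rw [Function.update_self, Function.update_self, huU]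
          have hfn2 : (fun k => u (Fin.cons (α := fun _ => (PiTensorProduct K fun _ : Fin (n + 2) => L) ⧸ R) (x j) x' k)) = Fin.cons (m j) m' := by
            funext k
            refine Fin.cases ?_ (fun k => ?_) k
            · rw [Fin.cons_zero, Fin.cons_zero]
            · rw [Fin.cons_succ, Fin.cons_succ]
          rw [hfn2]
        · rw [Function.update_of_ne hji, Function.update_of_ne hji]
      rw [hfn]
    rw [hlhs, hzsum]
    exact Finset.sum_congr rfl fun i _ => (hrhs i).symm
  · -- skew symmetry
    intro x σ
    have hperm := aux_perm g hg0 σ (fun i => u (x i))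
    have h2 : Ubr (fun i => x (σ i)) = (Equiv.Perm.sign σ : ℤ) • Ubr x := by
      rw [hUapp, hUapp]
      exact hperm
    rw [h2, smul_smul]
    have : ((Equiv.Perm.sign σ : ℤ) * (Equiv.Perm.sign σ : ℤ)) = 1 := by
      rcases Int.units_eq_one_or (Equiv.Perm.sign σ) with h | h <;> rw [h] <;> rfl
    rw [this, one_smul]
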